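/- arXiv:2412.20195 — 4 statements merged into one kernel-verified Lean document; each statement's English description precedes it below -/
import Mathlib

section
/- There is no 1-layer single-token output transformer with embedding dimension n^{o(1)} and output MLP with n^{o(1)} ReLU neurons that computes comp_n. Precisely: let (T_n)_{n≥2} be any sequence where T_n is a 1-layer single-token output transformer for input length n and alphabet {1,…,n}, with embedding dimension d_n and whose output function 𝒩_n is a ReLU MLP with m_n ReLU neurons. If for every c > 0 one has d_n ≤ n^c and m_n ≤ n^c for all sufficiently large n, then there exists n such that T_n does not compute comp_n (i.e., T_n(x) ≠ comp_n(x) for some input x ∈ {1,…,n}^n). -/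
/-- A 1-layer single-token output transformer of embedding dimension `d`
for input length `n` and alphabet `S`: a positional encoding `p`, an initial
value vector `h` of the output token, key and query matrices `K`, `Q`,
and an output function `N`. -/
structure Transformer (n d : ℕ) (S : Type*) where
  /-- positional encoding -/
  p : Fin n → S → (Fin d → ℝ)
  /-- initial value vector of the output token -/
  h : Fin d → ℝ
  /-- key matrix -/
  K : Matrix (Fin d) (Fin d) ℝ
  /-- query matrix -/
  Q : Matrix (Fin d) (Fin d) ℝ
  /-- output function -/
  N : (Fin d → ℝ) → ℝ

/-- The attention weight `e^{⟨K f_i, Q h⟩}` of input token `i`, where `f_i = p(i, x_i)`. -/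
noncomputable def Transformer.w {n d : ℕ} {S : Type*} (T : Transformer n d S)
    (x : Fin n → S) (i : Fin n) : ℝ :=
  Real.exp (dotProduct (T.K.mulVec (T.p i (x i))) (T.Q.mulVec T.h))

/-- The output of the transformer on input `x`: it computes the softmax average
`ĥ = (Σ_i e^{⟨K f_i, Q h⟩} f_i) / (Σ_i e^{⟨K f_i, Q h⟩})` and outputs `1` if
`N (h + ĥ) > 0`, and `0` otherwise. -/
noncomputable def Transformer.output {n d : ℕ} {S : Type*} (T : Transformer n d S)
    (x : Fin n → S) : ℕ :=
  if 0 < T.N (T.h + (∑ i, T.w x i)⁻¹ • ∑ i, T.w x i • T.p i (x i)) then 1 else 0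

/-- `IsMLP din dout F m` : the function `F : ℝ^din → ℝ^dout` is computable by a
feedforward circuit composing affine maps over `ℝ` and the coordinatewise ReLU
activation `t ↦ max (t, 0)`, using `m` ReLU gates in total. -/
inductive IsMLP : (din dout : ℕ) → ((Fin din → ℝ) → (Fin dout → ℝ)) → ℕ → Prop
  | affine {din dout : ℕ} (A : Matrix (Fin dout) (Fin din) ℝ) (b : Fin dout → ℝ) :
      IsMLP din dout (fun x => A.mulVec x + b) 0
  | relu (d : ℕ) : IsMLP d d (fun x i => max (x i) 0) d
  | comp {d₁ d₂ d₃ m₁ m₂ : ℕ} {f : (Fin d₁ → ℝ) → (Fin d₂ → ℝ)}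
      {g : (Fin d₂ → ℝ) → (Fin d₃ → ℝ)} :
      IsMLP d₁ d₂ f m₁ → IsMLP d₂ d₃ g m₂ → IsMLP d₁ d₃ (g ∘ f) (m₁ + m₂)

/-- `N : ℝ^d → ℝ` is a ReLU MLP with `m` ReLU neurons. -/
def IsReLUMLP (d m : ℕ) (N : (Fin d → ℝ) → ℝ) : Prop :=
  ∃ F : (Fin d → ℝ) → (Fin 1 → ℝ), IsMLP d 1 F m ∧ ∀ v, N v = F v 0

/-- The composition function `comp_n` : the alphabet `{1, …, n}` is modelled as `Fin n`
(index `i` standing for the symbol `i + 1`); with `φ = a`, the output is `1` if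
`φ(φ(1)) = 1` and `0` otherwise. -/
def comp {n : ℕ} (a : Fin n → Fin n) : ℕ :=
  if h : 0 < n then (if a (a ⟨0, h⟩) = ⟨0, h⟩ then 1 else 0) else 0



open Finset in
lemma sum_choose_le (K r : ℕ) : ∑ k ∈ Iic r, K.choose k ≤ (K+1)^r := by
  induction r with
  | zero =>
    have : (Iic 0 : Finset ℕ) = {0} := rfl
    simp [this]
  | succ r ih =>
    have h1 : ∑ k ∈ Iic (r+1), K.choose k = K.choose (r+1) + ∑ k ∈ Iic r, K.choose k := by
      rw [← Finset.sum_insert (by simp : r+1 ∉ Iic r)]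
      congr 1
      ext k; simp [Nat.lt_succ_iff, le_iff_lt_or_eq, or_comm]
    have h2 : K.choose (r+1) ≤ K * K.choose r := by
      calc K.choose (r+1) ≤ K.choose (r+1) * (r+1) := Nat.le_mul_of_pos_right _ (Nat.succ_pos r)
        _ = K.choose r * (K - r) := Nat.choose_succ_right_eq K r
        _ ≤ K.choose r * K := Nat.mul_le_mul_left _ (Nat.sub_le K r)
        _ = K * K.choose r := Nat.mul_comm _ _
    have h3 : K.choose r ≤ ∑ k ∈ Iic r, K.choose k :=
      Finset.single_le_sum (fun k _ => Nat.zero_le _) (by simp)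
    calc ∑ k ∈ Iic (r+1), K.choose k ≤ K * K.choose r + ∑ k ∈ Iic r, K.choose k := by
          rw [h1]; exact Nat.add_le_add_right h2 _
      _ ≤ K * (∑ k ∈ Iic r, K.choose k) + ∑ k ∈ Iic r, K.choose k :=
          Nat.add_le_add_right (Nat.mul_le_mul_left _ h3) _
      _ = (K+1) * ∑ k ∈ Iic r, K.choose k := by ring
      _ ≤ (K+1) * (K+1)^r := Nat.mul_le_mul_left _ ih
      _ = (K+1)^(r+1) := by ring

/-- evaluation of an affine functional represented as (coeffs, const) -/
def aev {D : ℕ} (g : (Fin D → ℝ) × ℝ) (P : Fin D → ℝ) : ℝ :=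
  dotProduct g.1 P + g.2

lemma aev_sum {D : ℕ} {ι : Type*} (t : Finset ι) (f : ι → (Fin D → ℝ) × ℝ) (P : Fin D → ℝ) :
    aev (∑ k ∈ t, f k) P = ∑ k ∈ t, aev (f k) P := by
  classical
  induction t using Finset.induction with
  | empty => simp [aev, dotProduct]
  | insert _ _ h ih =>
    rw [Finset.sum_insert h, Finset.sum_insert h, ← ih]
    simp [aev, add_dotProduct]
    ring

lemma aev_smul {D : ℕ} (r : ℝ) (g : (Fin D → ℝ) × ℝ) (P : Fin D → ℝ) :
    aev (r • g) P = r * aev g P := by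
  simp [aev, smul_dotProduct]
  ring

lemma aev_zero {D : ℕ} (P : Fin D → ℝ) : aev (0 : (Fin D → ℝ) × ℝ) P = 0 := by
  simp [aev, dotProduct]

open Finset in
/-- Sign-pattern counting for affine functionals: the number of sign patterns of
`Fintype.card ι` affine functionals on `ℝ^D`, over any set `S` of points,
is at most `(card ι + 1)^(D+1)`. -/
lemma pattern_ncard_le {D : ℕ} {ι : Type*} [Fintype ι] [DecidableEq ι]
    (g : ι → (Fin D → ℝ) × ℝ) (S : Set (Fin D → ℝ)) :
    ((fun P k => decide (0 < aev (g k) P)) '' S).ncard ≤ (Fintype.card ι + 1) ^ (D + 1) := by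
  classical
  set Φ : (Fin D → ℝ) → ι → Bool := fun P k => decide (0 < aev (g k) P) with hΦ
  have hfin : (Φ '' S).Finite := Set.toFinite _
  set toSet : (ι → Bool) → Finset ι := fun f => univ.filter (fun k => f k = true) with htoSet
  have htoSetInj : Function.Injective toSet := by
    intro f f' h
    funext k
    have h1 : (k ∈ toSet f) = (k ∈ toSet f') := by rw [h]
    simp only [htoSet, Finset.mem_filter, Finset.mem_univ, true_and, eq_iff_iff] at h1
    cases hf : f k <;> cases hf' : f' k <;> simp [hf, hf'] at h1 ⊢
  set 𝒜 : Finset (Finset ι) := hfin.toFinset.image toSet with h𝒜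
  have hcard1 : (Φ '' S).ncard = 𝒜.card := by
    rw [h𝒜, Finset.card_image_of_injective _ htoSetInj,
      Set.ncard_eq_toFinset_card _ hfin]
  -- every shattered set has card ≤ D + 1
  have hshat : ∀ s ∈ 𝒜.shatterer, s.card ≤ D + 1 := by
    intro s hs
    rw [Finset.mem_shatterer] at hs
    by_contra hbig
    push_neg at hbig
    -- the functionals indexed by s are linearly dependent
    have hdep : ¬ LinearIndependent ℝ (fun k : ↥s => g ↑k) := by
      intro hli
      have := hli.fintype_card_le_finrank
      rw [Fintype.card_coe] at this
      have hrk : Module.finrank ℝ ((Fin D → ℝ) × ℝ) = D + 1 := by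
        simp [Module.finrank_prod, Module.finrank_pi]
      omega
    obtain ⟨c, hc0, k₀, hk₀⟩ := Fintype.not_linearIndependent_iff.mp hdep
    -- extend c to ι by zero
    set c' : ι → ℝ := fun k => if h : k ∈ s then c ⟨k, h⟩ else 0 with hc'
    have hsum : ∀ P, ∑ k ∈ s, c' k * aev (g k) P = 0 := by
      intro P
      have : ∑ k ∈ s, c' k • g k = 0 := by
        rw [← Finset.sum_attach s (fun k => c' k • g k)]
        rw [← hc0]
        apply Finset.sum_congr rfl
        intro k _
        simp [hc', k.2]
      calc ∑ k ∈ s, c' k * aev (g k) P = ∑ k ∈ s, aev (c' k • g k) P := by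
            simp [aev_smul]
        _ = aev (∑ k ∈ s, c' k • g k) P := (aev_sum _ _ _).symm
        _ = 0 := by rw [this, aev_zero]
    have hex : ∃ c'' : ι → ℝ, (∀ P, ∑ k ∈ s, c'' k * aev (g k) P = 0) ∧ ∃ k ∈ s, 0 < c'' k := by
      by_cases hpos : ∃ k ∈ s, 0 < c' k
      · exact ⟨c', hsum, hpos⟩
      · push_neg at hpos
        refine ⟨-c', ?_, ?_⟩
        · intro P
          have := congrArg Neg.neg (hsum P)
          simpa [neg_mul, ← Finset.sum_neg_distrib] using this
        refine ⟨k₀, k₀.2, ?_⟩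
        have h1 : c' ↑k₀ ≠ 0 := by simp [hc', k₀.2, hk₀]
        have h2 : c' ↑k₀ ≤ 0 := hpos _ k₀.2
        simp only [Pi.neg_apply]
        cases lt_or_eq_of_le h2 with
        | inl h => linarith
        | inr h => exact absurd h h1
    obtain ⟨c'', hsum'', k₁, hk₁s, hk₁⟩ := hex
    -- the positive-coefficient subset must be realized
    obtain ⟨u, hu𝒜, hsu⟩ := hs (Finset.filter_subset (fun k => 0 < c'' k) s)
    rw [h𝒜, Finset.mem_image] at hu𝒜
    obtain ⟨f, hf, rfl⟩ := hu𝒜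
    rw [Set.Finite.mem_toFinset] at hf
    obtain ⟨P, _, rfl⟩ := hf
    have hmem : ∀ k ∈ s, (0 < aev (g k) P ↔ 0 < c'' k) := by
      intro k hk
      constructor
      · intro h
        have : k ∈ s ∩ toSet (Φ P) := by
          simp [htoSet, hΦ, hk, h]
        rw [hsu] at this
        exact (Finset.mem_filter.mp this).2
      · intro h
        have : k ∈ s ∩ toSet (Φ P) := by
          rw [hsu]; exact Finset.mem_filter.mpr ⟨hk, h⟩
        have := (Finset.mem_inter.mp this).2
        simpa [htoSet, hΦ] using this
    have hpos : 0 < ∑ k ∈ s, c'' k * aev (g k) P := by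
      apply Finset.sum_pos'
      · intro k hk
        rcases lt_trichotomy (c'' k) 0 with h | h | h
        · have : ¬ (0 < aev (g k) P) := fun hh => absurd ((hmem k hk).mp hh) (by linarith)
          push_neg at this
          nlinarith
        · simp [h]
        · exact le_of_lt (mul_pos h ((hmem k hk).mpr h))
      · exact ⟨k₁, hk₁s, mul_pos hk₁ ((hmem k₁ hk₁s).mpr hk₁)⟩
    rw [hsum'' P] at hpos
    exact lt_irrefl 0 hpos
  have hvc : 𝒜.vcDim ≤ D + 1 := Finset.sup_le hshat
  calc (Φ '' S).ncard = 𝒜.card := hcard1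
    _ ≤ 𝒜.shatterer.card := Finset.card_le_card_shatterer 𝒜
    _ ≤ ∑ k ∈ Iic 𝒜.vcDim, (Fintype.card ι).choose k := Finset.card_shatterer_le_sum_vcDim
    _ ≤ ∑ k ∈ Iic (D+1), (Fintype.card ι).choose k :=
        Finset.sum_le_sum_of_subset (Finset.Iic_subset_Iic.mpr hvc)
    _ ≤ (Fintype.card ι + 1) ^ (D + 1) := sum_choose_le _ _



lemma ncard_finset_biUnion_le {β γ : Type*} (Y : Finset β) (f : β → Set γ) (B : ℕ)
    (hfin : ∀ y ∈ Y, (f y).Finite) (hB : ∀ y ∈ Y, (f y).ncard ≤ B) :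
    (⋃ y ∈ Y, f y).Finite ∧ (⋃ y ∈ Y, f y).ncard ≤ Y.card * B := by
  classical
  induction Y using Finset.induction with
  | empty => simp
  | @insert a Y ha ih =>
    have h1 : (⋃ y ∈ insert a Y, f y) = f a ∪ ⋃ y ∈ Y, f y := by
      simp [Finset.set_biUnion_insert]
    obtain ⟨ihfin, ihcard⟩ := ih (fun y hy => hfin y (Finset.mem_insert_of_mem hy))
      (fun y hy => hB y (Finset.mem_insert_of_mem hy))
    have hfa : (f a).Finite := hfin a (Finset.mem_insert_self a Y)
    constructor
    · rw [h1]; exact hfa.union ihfin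
    · rw [h1]
      calc (f a ∪ ⋃ y ∈ Y, f y).ncard ≤ (f a).ncard + (⋃ y ∈ Y, f y).ncard :=
            Set.ncard_union_le _ _
        _ ≤ B + Y.card * B := Nat.add_le_add (hB a (Finset.mem_insert_self a Y)) ihcard
        _ = (insert a Y).card * B := by rw [Finset.card_insert_of_notMem ha]; ring

/-- counting pairs `(G a, q a)` : at most (number of `G` values) times
 (max number of `q` values on each `G`-fiber). -/
lemma ncard_pair_image_le {α β γ : Type*} (S : Set α) (G : α → β) (q : α → γ)
    (hG : (G '' S).Finite) (B : ℕ)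
    (hq : ∀ y ∈ G '' S, (q '' {a | a ∈ S ∧ G a = y}).Finite ∧
      (q '' {a | a ∈ S ∧ G a = y}).ncard ≤ B) :
    ((fun a => (G a, q a)) '' S).Finite ∧
      ((fun a => (G a, q a)) '' S).ncard ≤ (G '' S).ncard * B := by
  classical
  set U : Set (β × γ) := ⋃ y ∈ hG.toFinset, Prod.mk y '' (q '' {a | a ∈ S ∧ G a = y}) with hU
  have hsub : (fun a => (G a, q a)) '' S ⊆ U := by
    rintro _ ⟨a, ha, rfl⟩
    rw [hU]
    apply Set.mem_biUnion (hG.mem_toFinset.mpr ⟨a, ha, rfl⟩)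
    exact ⟨q a, ⟨a, ⟨ha, rfl⟩, rfl⟩, rfl⟩
  have hUb := ncard_finset_biUnion_le hG.toFinset
    (fun y => Prod.mk y '' (q '' {a | a ∈ S ∧ G a = y})) B
    (fun y hy => ((hq y (hG.mem_toFinset.mp hy)).1).image _)
    (fun y hy => le_trans (Set.ncard_image_le (hq y (hG.mem_toFinset.mp hy)).1)
      (hq y (hG.mem_toFinset.mp hy)).2)
  have hfin : ((fun a => (G a, q a)) '' S).Finite := hUb.1.subset hsub
  refine ⟨hfin, ?_⟩
  calc ((fun a => (G a, q a)) '' S).ncard ≤ U.ncard := Set.ncard_le_ncard hsub hUb.1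
    _ ≤ hG.toFinset.card * B := hUb.2
    _ = (G '' S).ncard * B := by rw [Set.ncard_eq_toFinset_card _ hG]

lemma aev_add {D : ℕ} (g g' : (Fin D → ℝ) × ℝ) (P : Fin D → ℝ) :
    aev (g + g') P = aev g P + aev g' P := by
  simp [aev, add_dotProduct]; ring

lemma relu_bound (M d D : ℕ) : (M*d+1)^(D+1) ≤ ((M+1)*(d+1)+1)^((D+1)*d) := by
  cases d with
  | zero => simp
  | succ k =>
    calc (M*(k+1)+1)^(D+1) ≤ ((M+1)*(k+1+1)+1)^(D+1) := by
          apply Nat.pow_le_pow_left; nlinarith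
      _ ≤ ((M+1)*(k+1+1)+1)^((D+1)*(k+1)) := by
          apply Nat.pow_le_pow_right (by positivity)
          exact Nat.le_mul_of_pos_right _ (Nat.succ_pos k)

lemma mlp_bound_mono (M D : ℕ) {m m' : ℕ} (h : m ≤ m') :
    ((M+1)*(m+1)+1)^((D+1)*m) ≤ ((M+1)*(m'+1)+1)^((D+1)*m') := by
  calc ((M+1)*(m+1)+1)^((D+1)*m) ≤ ((M+1)*(m'+1)+1)^((D+1)*m) := by
        apply Nat.pow_le_pow_left; nlinarith
    _ ≤ ((M+1)*(m'+1)+1)^((D+1)*m') := by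
        apply Nat.pow_le_pow_right (by positivity)
        exact Nat.mul_le_mul_left _ h

/-- Key structural lemma: if each coordinate of the input to an MLP `F` is of the
form (affine in `P`) / (positive affine in `P`), then on any set `S` the outputs
are of the same form, where the affine numerator representation takes at most
`((M+1)*(m+1)+1)^((D+1)*m)` distinct values on `S`. -/
lemma mlp_partition (D M : ℕ) (S : Set (Fin D → ℝ)) (ρ : Fin M → (Fin D → ℝ) × ℝ)
    (hρ : ∀ j : Fin M, ∀ P ∈ S, 0 < aev (ρ j) P) :
    ∀ {din dout m : ℕ} {F : (Fin din → ℝ) → (Fin dout → ℝ)}, IsMLP din dout F m →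
    ∀ L : Fin M → Fin din → (Fin D → ℝ) × ℝ,
    ∃ G : (Fin D → ℝ) → (Fin M → Fin dout → (Fin D → ℝ) × ℝ),
      (∀ P ∈ S, ∀ (j : Fin M) (i : Fin dout),
          F (fun i' => aev (L j i') P / aev (ρ j) P) i = aev (G P j i) P / aev (ρ j) P) ∧
      (G '' S).Finite ∧ (G '' S).ncard ≤ ((M+1)*(m+1)+1)^((D+1)*m) := by
  intro din dout m F hF
  induction hF with
  | @affine din dout A b =>
    intro L
    refine ⟨fun _ j i => (∑ i', A i i' • L j i') + (b i) • ρ j, ?_, ?_, ?_⟩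
    · intro P hP j i
      have hne : aev (ρ j) P ≠ 0 := ne_of_gt (hρ j P hP)
      have hR : aev ((∑ i', A i i' • L j i') + (b i) • ρ j) P
          = (∑ i', A i i' * aev (L j i') P) + b i * aev (ρ j) P := by
        rw [aev_add, aev_sum, aev_smul]
        simp [aev_smul]
      simp only [Pi.add_apply, Matrix.mulVec, dotProduct]
      rw [hR]
      field_simp
      rw [mul_add, Finset.mul_sum]
      congr 1
      exact Finset.sum_congr rfl (fun x _ => by field_simp)
    · apply Set.Finite.subset (Set.finite_singleton (fun j i => (∑ i', A i i' • L j i') + (b i) • ρ j))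
      rintro _ ⟨P, _, rfl⟩; rfl
    · calc ((fun _ j i => (∑ i', A i i' • L j i') + (b i) • ρ j) '' S).ncard
          ≤ ({fun j i => (∑ i', A i i' • L j i') + (b i) • ρ j} : Set _).ncard := by
            apply Set.ncard_le_ncard _ (Set.finite_singleton _)
            rintro _ ⟨P, _, rfl⟩; rfl
        _ = 1 := Set.ncard_singleton _
        _ ≤ ((M+1)*(0+1)+1)^((D+1)*0) := by simp
  | relu dd =>
    intro L
    classical
    set pat : (Fin D → ℝ) → (Fin M × Fin dd) → Bool :=
      fun P jk => decide (0 < aev (L jk.1 jk.2) P) with hpat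
    set Ξ : ((Fin M × Fin dd) → Bool) → (Fin M → Fin dd → (Fin D → ℝ) × ℝ) :=
      fun f j i => if f (j, i) then L j i else 0 with hΞ
    refine ⟨fun P => Ξ (pat P), ?_, ?_, ?_⟩
    · intro P hP j i
      have hρpos := hρ j P hP
      by_cases h : 0 < aev (L j i) P
      · have : pat P (j, i) = true := by simp [hpat, h]
        rw [hΞ]
        simp only [this, if_true]
        exact max_eq_left (le_of_lt (div_pos h hρpos))
      · have hle : aev (L j i) P ≤ 0 := not_lt.mp h
        have : pat P (j, i) = false := by simp [hpat, h]
        rw [hΞ]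
        simp only [this, Bool.false_eq_true, if_false, aev_zero, zero_div]
        apply max_eq_right
        exact div_nonpos_of_nonpos_of_nonneg hle (le_of_lt hρpos)
    · have : (fun P => Ξ (pat P)) '' S = Ξ '' (pat '' S) := (Set.image_image Ξ pat S).symm
      rw [this]
      exact (Set.toFinite (pat '' S)).image Ξ
    · have h1 : (fun P => Ξ (pat P)) '' S = Ξ '' (pat '' S) := (Set.image_image Ξ pat S).symm
      rw [h1]
      calc (Ξ '' (pat '' S)).ncard ≤ (pat '' S).ncard :=
            Set.ncard_image_le (Set.toFinite _)
        _ ≤ (Fintype.card (Fin M × Fin dd) + 1) ^ (D + 1) := pattern_ncard_le (fun jk : Fin M × Fin dd => L jk.1 jk.2) S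
        _ = (M * dd + 1) ^ (D + 1) := by simp
        _ ≤ ((M+1)*(dd+1)+1)^((D+1)*dd) := relu_bound M dd D
  | @comp d₁ d₂ d₃ m₁ m₂ f g hf hg ihf ihg =>
    intro L
    obtain ⟨G₁, hG₁, hfin₁, hcard₁⟩ := ihf L
    choose G₂ hG₂ hfin₂ hcard₂ using ihg
    refine ⟨fun P => G₂ (G₁ P) P, ?_, ?_, ?_⟩
    · intro P hP j i
      have hfeq : f (fun i' => aev (L j i') P / aev (ρ j) P)
          = fun i' => aev (G₁ P j i') P / aev (ρ j) P := funext (hG₁ P hP j)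
      show g (f (fun i' => aev (L j i') P / aev (ρ j) P)) i = _
      rw [hfeq]
      exact hG₂ (G₁ P) P hP j i
    · -- finiteness
      have hpair := ncard_pair_image_le S G₁ (fun P => G₂ (G₁ P) P) hfin₁
        (((M+1)*(m₂+1)+1)^((D+1)*m₂)) ?_
      · have : (fun P => G₂ (G₁ P) P) '' S
            = Prod.snd '' ((fun a => (G₁ a, G₂ (G₁ a) a)) '' S) := by
          rw [Set.image_image]
        rw [this]
        exact hpair.1.image _
      · intro y hy
        have hsub : (fun P => G₂ (G₁ P) P) '' {a | a ∈ S ∧ G₁ a = y} ⊆ (G₂ y) '' S := by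
          rintro _ ⟨a, ⟨haS, haG⟩, rfl⟩
          exact ⟨a, haS, by subst haG; rfl⟩
        exact ⟨(hfin₂ y).subset hsub,
          le_trans (Set.ncard_le_ncard hsub (hfin₂ y)) (hcard₂ y)⟩
    · have hfib : ∀ y ∈ G₁ '' S, ((fun P => G₂ (G₁ P) P) '' {a | a ∈ S ∧ G₁ a = y}).Finite ∧
          ((fun P => G₂ (G₁ P) P) '' {a | a ∈ S ∧ G₁ a = y}).ncard
            ≤ ((M+1)*(m₂+1)+1)^((D+1)*m₂) := by
        intro y hy
        have hsub : (fun P => G₂ (G₁ P) P) '' {a | a ∈ S ∧ G₁ a = y} ⊆ (G₂ y) '' S := by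
          rintro _ ⟨a, ⟨haS, haG⟩, rfl⟩
          exact ⟨a, haS, by subst haG; rfl⟩
        exact ⟨(hfin₂ y).subset hsub,
          le_trans (Set.ncard_le_ncard hsub (hfin₂ y)) (hcard₂ y)⟩
      have hpair := ncard_pair_image_le S G₁ (fun P => G₂ (G₁ P) P) hfin₁
        (((M+1)*(m₂+1)+1)^((D+1)*m₂)) hfib
      have himg : (fun P => G₂ (G₁ P) P) '' S
          = Prod.snd '' ((fun a => (G₁ a, G₂ (G₁ a) a)) '' S) := by
        rw [Set.image_image]
      calc ((fun P => G₂ (G₁ P) P) '' S).ncard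
          ≤ ((fun a => (G₁ a, G₂ (G₁ a) a)) '' S).ncard := by
            rw [himg]; exact Set.ncard_image_le hpair.1
        _ ≤ (G₁ '' S).ncard * ((M+1)*(m₂+1)+1)^((D+1)*m₂) := hpair.2
        _ ≤ ((M+1)*(m₁+1)+1)^((D+1)*m₁) * ((M+1)*(m₂+1)+1)^((D+1)*m₂) :=
            Nat.mul_le_mul_right _ hcard₁
        _ ≤ ((M+1)*(m₁+m₂+1)+1)^((D+1)*m₁) * ((M+1)*(m₁+m₂+1)+1)^((D+1)*m₂) :=
            Nat.mul_le_mul (Nat.pow_le_pow_left (by nlinarith) _)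
              (Nat.pow_le_pow_left (by nlinarith) _)
        _ = ((M+1)*(m₁+m₂+1)+1)^((D+1)*(m₁+m₂)) := by
            rw [← pow_add]; ring_nf

lemma div_pos_iff_right {a c : ℝ} (hc : 0 < c) : 0 < a / c ↔ 0 < a := by
  constructor
  · intro h
    have := mul_pos h hc
    rwa [div_mul_cancel₀ _ (ne_of_gt hc)] at this
  · exact fun h => div_pos h hc

lemma dot_indicator {D : ℕ} (c : Fin D) (P : Fin D → ℝ) :
    dotProduct (fun k => if k = c then 1 else 0) P = P c := by
  simp [dotProduct, ite_mul, Finset.sum_ite_eq']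

set_option maxHeartbeats 1600000 in
/-- The main counting estimate: a transformer with a ReLU-MLP head that computes
`comp` on all inputs of length `n ≥ 2` satisfies the counting inequality. -/
lemma transformer_count (n : ℕ) (hn : 2 ≤ n) (dn mn : ℕ) (Tn : Transformer n dn (Fin n))
    (hMLP : IsReLUMLP dn mn Tn.N)
    (hcomp : ∀ x : Fin n → Fin n, Tn.output x = comp x) :
    2^(n-1) ≤ ((n+1)*(mn+1)+1)^((dn+2)*(mn+1)) := by
  classical
  obtain ⟨F, hF, hNF⟩ := hMLP
  have hnpos : 0 < n := by omega
  set zero : Fin n := ⟨0, hnpos⟩ with hzero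
  set one : Fin n := ⟨1, by omega⟩ with hone
  have hzo : zero ≠ one := by simp [hzero, hone, Fin.ext_iff]
  -- attention weights as a function of position and symbol
  set wgt : Fin n → Fin n → ℝ :=
    fun i s => Real.exp (dotProduct (Tn.K.mulVec (Tn.p i s)) (Tn.Q.mulVec Tn.h)) with hwgt
  have hw : ∀ (x : Fin n → Fin n) i, Tn.w x i = wgt i (x i) := fun x i => rfl
  have hwpos : ∀ i s, 0 < wgt i s := fun i s => Real.exp_pos _
  -- the affine data
  set ρ : Fin n → (Fin (dn+1) → ℝ) × ℝ :=
    fun j => (fun k => if k = Fin.last dn then 1 else 0, wgt zero j) with hρdef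
  set L : Fin n → Fin dn → (Fin (dn+1) → ℝ) × ℝ :=
    fun j i => (fun k => (if k = i.castSucc then 1 else 0)
        + Tn.h i * (if k = Fin.last dn then 1 else 0),
      wgt zero j * Tn.p zero j i + Tn.h i * wgt zero j) with hLdef
  set S : Set (Fin (dn+1) → ℝ) := {P | 0 ≤ P (Fin.last dn)} with hSdef
  have haevρ : ∀ j P, aev (ρ j) P = P (Fin.last dn) + wgt zero j := by
    intro j P
    simp only [aev, hρdef, dot_indicator]
  have hρpos : ∀ (j : Fin n), ∀ P ∈ S, 0 < aev (ρ j) P := by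
    intro j P hP
    rw [haevρ]
    have := hwpos zero j
    have hP' : 0 ≤ P (Fin.last dn) := hP
    linarith
  have haevL : ∀ j i P, aev (L j i) P
      = P i.castSucc + Tn.h i * P (Fin.last dn)
        + (wgt zero j * Tn.p zero j i + Tn.h i * wgt zero j) := by
    intro j i P
    have hcoef : (fun k => (if k = i.castSucc then 1 else 0)
        + Tn.h i * (if k = Fin.last dn then 1 else 0))
        = (fun k => if k = i.castSucc then (1:ℝ) else 0)
          + (Tn.h i) • (fun k => if k = Fin.last dn then (1:ℝ) else 0) := rfl
    simp only [aev, hLdef, hcoef, add_dotProduct, smul_dotProduct,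
      dot_indicator, smul_eq_mul]
  -- the partition from the MLP structure
  obtain ⟨G, hG, hGfin, hGcard⟩ := mlp_partition (dn+1) n S ρ hρpos hF L
  -- inputs and parameter points
  set sym : (Fin n → Bool) → Fin n → Fin n := fun b i => if b i then one else zero with hsym
  set xx : (Fin n → Bool) → Fin n → Fin n → Fin n :=
    fun b j i => if i = zero then j else sym b i with hxx
  set Ab : (Fin n → Bool) → Fin dn → ℝ :=
    fun b i => ∑ i' ∈ Finset.univ.erase zero, wgt i' (sym b i') * Tn.p i' (sym b i') i with hAb
  set sb : (Fin n → Bool) → ℝ :=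
    fun b => ∑ i' ∈ Finset.univ.erase zero, wgt i' (sym b i') with hsb
  set Pb : (Fin n → Bool) → (Fin (dn+1) → ℝ) := fun b => Fin.snoc (Ab b) (sb b) with hPb
  have hPbS : ∀ b, Pb b ∈ S := by
    intro b
    show 0 ≤ Pb b (Fin.last dn)
    rw [hPb]
    simp only [Fin.snoc_last]
    exact Finset.sum_nonneg (fun i _ => (hwpos _ _).le)
  have hsumw : ∀ b j, ∑ i, Tn.w (xx b j) i = wgt zero j + sb b := by
    intro b j
    rw [← Finset.add_sum_erase Finset.univ _ (Finset.mem_univ zero)]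
    have h1 : Tn.w (xx b j) zero = wgt zero j := by rw [hw]; simp [hxx]
    have h2 : ∑ i ∈ Finset.univ.erase zero, Tn.w (xx b j) i = sb b := by
      apply Finset.sum_congr rfl
      intro i hi
      rw [hw]
      have : i ≠ zero := (Finset.mem_erase.mp hi).1
      simp [hxx, this]
    rw [h1, h2]
  have hsump : ∀ b j (i : Fin dn), (∑ i', Tn.w (xx b j) i' • Tn.p i' (xx b j i')) i
      = wgt zero j * Tn.p zero j i + Ab b i := by
    intro b j i
    rw [Finset.sum_apply]
    rw [← Finset.add_sum_erase Finset.univ _ (Finset.mem_univ zero)]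
    have h1 : (Tn.w (xx b j) zero • Tn.p zero (xx b j zero)) i = wgt zero j * Tn.p zero j i := by
      rw [Pi.smul_apply, hw, smul_eq_mul]
      simp [hxx]
    have h2 : ∑ i' ∈ Finset.univ.erase zero, (Tn.w (xx b j) i' • Tn.p i' (xx b j i')) i
        = Ab b i := by
      apply Finset.sum_congr rfl
      intro i' hi'
      rw [Pi.smul_apply, hw, smul_eq_mul]
      have : i' ≠ zero := (Finset.mem_erase.mp hi').1
      simp [hxx, this]
    rw [h1, h2]
  -- the argument fed to the MLP
  have hargeq : ∀ b j, Tn.h + (∑ i, Tn.w (xx b j) i)⁻¹ • ∑ i, Tn.w (xx b j) i • Tn.p i (xx b j i)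
      = fun i => aev (L j i) (Pb b) / aev (ρ j) (Pb b) := by
    intro b j
    funext i
    rw [Pi.add_apply, Pi.smul_apply, hsumw, smul_eq_mul, hsump, haevL, haevρ]
    rw [hPb]
    simp only [Fin.snoc_castSucc, Fin.snoc_last]
    have h1 : 0 < wgt zero j + sb b := by
      have := hwpos zero j
      have : 0 ≤ sb b := Finset.sum_nonneg (fun i _ => (hwpos _ _).le)
      have := hwpos zero j
      linarith
    have h2 : 0 < sb b + wgt zero j := by linarith
    rw [eq_div_iff h2.ne', add_mul]
    have h4 : (wgt zero j + sb b)⁻¹ * (wgt zero j * Tn.p zero j i + Ab b i) * (sb b + wgt zero j)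
        = wgt zero j * Tn.p zero j i + Ab b i := by
      rw [show sb b + wgt zero j = wgt zero j + sb b from add_comm _ _, mul_comm,
        ← mul_assoc, mul_inv_cancel₀ h1.ne', one_mul]
    rw [h4]
    ring
  -- outputs as sign conditions
  have hout : ∀ b j, Tn.output (xx b j)
      = if 0 < aev (G (Pb b) j 0) (Pb b) then 1 else 0 := by
    intro b j
    unfold Transformer.output
    rw [hargeq b j, hNF, hG (Pb b) (hPbS b) j 0]
    simp only [div_pos_iff_right (hρpos j (Pb b) (hPbS b))]
  -- comp on these inputs reads off bits
  have hcompval : ∀ b j, comp (xx b j) = if xx b j j = zero then 1 else 0 := by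
    intro b j
    have h0 : xx b j zero = j := by simp [hxx]
    unfold comp
    rw [dif_pos hnpos]
    show (if xx b j (xx b j zero) = zero then 1 else 0) = _
    rw [h0]
  -- injection from bit vectors
  set Ψ : (Fin (dn+1) → ℝ) → (Fin n → Fin 1 → (Fin (dn+1) → ℝ) × ℝ) × (Fin n → Bool) :=
    fun P => (G P, fun j => decide (0 < aev (G P j 0) P)) with hΨ
  set ι' : Fin (n-1) → Fin n := fun k => ⟨k.1+1, by omega⟩ with hι'
  set emb : (Fin (n-1) → Bool) → (Fin n → Bool) :=
    fun c i => if h : (i:ℕ) = 0 then false else c ⟨i.1-1, by omega⟩ with hemb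
  have hembrec : ∀ c k, emb c (ι' k) = c k := by
    intro c k
    simp only [hemb, hι']
    rw [dif_neg (by omega)]
    congr 1 <;> simp
  have hinj : Function.Injective (fun c => Ψ (Pb (emb c))) := by
    intro c c' hcc
    -- outputs agree, hence comp agrees, hence bits agree
    have hbit : ∀ j, Tn.output (xx (emb c) j) = Tn.output (xx (emb c') j) := by
      intro j
      rw [hout, hout]
      have h2 := congrArg Prod.snd hcc
      have h3 := congrFun h2 j
      simp only [hΨ] at h3
      rw [decide_eq_decide] at h3
      by_cases h : 0 < aev (G (Pb (emb c)) j 0) (Pb (emb c))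
      · rw [if_pos h, if_pos (h3.mp h)]
      · rw [if_neg h, if_neg (fun hh => h (h3.mpr hh))]
    funext k
    have hj := hbit (ι' k)
    rw [hcomp, hcomp, hcompval, hcompval] at hj
    have hjz : ι' k ≠ zero := by
      simp [hι', hzero, Fin.ext_iff]
    have hxc : xx (emb c) (ι' k) (ι' k) = sym (emb c) (ι' k) := by simp [hxx, hjz]
    have hxc' : xx (emb c') (ι' k) (ι' k) = sym (emb c') (ι' k) := by simp [hxx, hjz]
    rw [hxc, hxc'] at hj
    simp only [hsym] at hj
    rw [hembrec, hembrec] at hj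
    by_cases hck : c k = true <;> by_cases hck' : c' k = true
    · rw [hck, hck']
    · simp only [hck, hck', if_true, if_false] at hj
      simp [Ne.symm hzo] at hj
    · simp only [hck, hck', if_true, if_false] at hj
      simp [Ne.symm hzo] at hj
    · rw [Bool.not_eq_true] at hck hck'
      rw [hck, hck']
  -- counting
  have himg : (fun c => Ψ (Pb (emb c))) '' Set.univ ⊆ Ψ '' S := by
    rintro _ ⟨c, _, rfl⟩
    exact ⟨Pb (emb c), hPbS _, rfl⟩
  have hfibbound : ∀ y ∈ G '' S,
      ((fun P => (fun j => decide (0 < aev (G P j 0) P))) '' {a | a ∈ S ∧ G a = y}).Finite ∧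
      ((fun P => (fun j => decide (0 < aev (G P j 0) P))) '' {a | a ∈ S ∧ G a = y}).ncard
        ≤ (n+1)^(dn+2) := by
    intro y hy
    constructor
    · exact Set.toFinite _
    · have hagree : ∀ P ∈ {a | a ∈ S ∧ G a = y},
          (fun j => decide (0 < aev (G P j 0) P)) = fun j => decide (0 < aev (y j 0) P) := by
        intro P hP
        rw [hP.2]
      rw [Set.image_congr hagree]
      have := pattern_ncard_le (fun j : Fin n => y j 0) {a | a ∈ S ∧ G a = y}
      simpa using this
  have hpair := ncard_pair_image_le S G (fun P => (fun j => decide (0 < aev (G P j 0) P)))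
    hGfin ((n+1)^(dn+2)) hfibbound
  have hΨeq : Ψ '' S = (fun a => (G a, (fun j => decide (0 < aev (G a j 0) a)))) '' S := rfl
  have hΨfin : (Ψ '' S).Finite := by rw [hΨeq]; exact hpair.1
  have hcount : 2^(n-1) ≤ (Ψ '' S).ncard := by
    have h1 : ((fun c => Ψ (Pb (emb c))) '' Set.univ).ncard = 2^(n-1) := by
      rw [Set.ncard_image_of_injective _ hinj, Set.ncard_univ, Nat.card_eq_fintype_card,
        Fintype.card_fun]
      simp
    rw [← h1]
    exact Set.ncard_le_ncard himg hΨfin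
  have hbound : (Ψ '' S).ncard ≤ ((n+1)*(mn+1)+1)^((dn+2)*(mn+1)) := by
    rw [hΨeq]
    calc ((fun a => (G a, (fun j => decide (0 < aev (G a j 0) a)))) '' S).ncard
        ≤ (G '' S).ncard * (n+1)^(dn+2) := hpair.2
      _ ≤ ((n+1)*(mn+1)+1)^((dn+1+1)*mn) * (n+1)^(dn+2) := Nat.mul_le_mul_right _ hGcard
      _ ≤ ((n+1)*(mn+1)+1)^((dn+2)*mn) * ((n+1)*(mn+1)+1)^(dn+2) := by
          apply Nat.mul_le_mul
          · apply Nat.le_of_eq; norm_num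
          · apply Nat.pow_le_pow_left; nlinarith
      _ = ((n+1)*(mn+1)+1)^((dn+2)*(mn+1)) := by rw [← pow_add]; ring_nf
  exact le_trans hcount hbound

set_option maxHeartbeats 800000 in
/-- There is no 1-layer single-token output transformer with embedding dimension
`n^{o(1)}` and output MLP with `n^{o(1)}` ReLU neurons that computes `comp_n`:
for any sequence `(T_n)_{n ≥ 2}` of 1-layer single-token output transformers for
input length `n` and alphabet `{1, …, n}`, with embedding dimensions `d n` and whose
output functions are ReLU MLPs with `m n` ReLU neurons, if for every `c > 0` one has
`d n ≤ n ^ c` and `m n ≤ n ^ c` for all sufficiently large `n`, then there exists `n`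
(with `n ≥ 2`) such that `T_n` does not compute `comp_n`. -/
theorem no_small_one_layer_transformer_computes_comp
    (d m : ℕ → ℕ) (T : (n : ℕ) → Transformer n (d n) (Fin n))
    (hMLP : ∀ n : ℕ, 2 ≤ n → IsReLUMLP (d n) (m n) ((T n).N))
    (hsmall : ∀ c : ℝ, 0 < c → ∃ N₀ : ℕ, ∀ n : ℕ, N₀ ≤ n →
      (d n : ℝ) ≤ (n : ℝ) ^ c ∧ (m n : ℝ) ≤ (n : ℝ) ^ c) :
    ∃ n : ℕ, 2 ≤ n ∧ ∃ x : Fin n → Fin n, (T n).output x ≠ comp x := by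
  by_contra hcon
  push_neg at hcon
  obtain ⟨N₀, hN₀⟩ := hsmall (1/4) (by norm_num)
  set n : ℕ := max (max N₀ 3) (288^4+1) with hndef
  have hnN₀ : N₀ ≤ n := le_trans (le_max_left _ _) (le_max_left _ _)
  have hn3 : 3 ≤ n := le_trans (le_max_right _ _) (le_max_left _ _)
  have hn288 : 288^4+1 ≤ n := le_max_right _ _
  have hn2 : 2 ≤ n := by omega
  have key := transformer_count n hn2 (d n) (m n) (T n) (hMLP n hn2) (hcon n hn2)
  obtain ⟨hd, hm⟩ := hN₀ n hnN₀
  set x : ℝ := (n : ℝ) with hxdef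
  have hx3 : (3:ℝ) ≤ x := by exact_mod_cast Nat.cast_le.mpr hn3
  have hx0 : (0:ℝ) < x := by linarith
  have hx1 : (1:ℝ) ≤ x := by linarith
  set X : ℝ := x ^ ((1:ℝ)/4) with hXdef
  have hX1 : (1:ℝ) ≤ X := Real.one_le_rpow hx1 (by norm_num)
  have hX0 : (0:ℝ) < X := by linarith
  have hdX : (d n : ℝ) ≤ X := by
    have : ((1:ℝ)/4) = (1/4 : ℝ) := by norm_num
    exact hd
  have hmX : (m n : ℝ) ≤ X := hm
  have hXx : X ≤ x := by
    calc X = x ^ ((1:ℝ)/4) := rfl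
      _ ≤ x ^ (1:ℝ) := Real.rpow_le_rpow_of_exponent_le hx1 (by norm_num)
      _ = x := Real.rpow_one x
  have keyR : (2:ℝ)^((n-1 : ℕ)) ≤ (((n+1)*(m n+1)+1 : ℕ) : ℝ)^((d n+2)*(m n+1)) := by
    exact_mod_cast key
  have hBig1 : (1:ℝ) ≤ (((n+1)*(m n+1)+1 : ℕ) : ℝ) := by
    have : (1:ℕ) ≤ (n+1)*(m n+1)+1 := by omega
    exact_mod_cast this
  have hlog := Real.log_le_log (by positivity) keyR
  rw [Real.log_pow, Real.log_pow] at hlog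
  have hE : (((d n+2)*(m n+1) : ℕ) : ℝ) ≤ 6*(X*X) := by
    push_cast
    nlinarith [hdX, hmX, hX1]
  have hBigle : (((n+1)*(m n+1)+1 : ℕ) : ℝ) ≤ x^(3:ℕ) := by
    push_cast
    have hmx : (m n : ℝ) ≤ x := le_trans hmX hXx
    have h1 : ((m n : ℝ)+1)*(x+1) ≤ (x+1)*(x+1) := by nlinarith
    have h2 : (0:ℝ) ≤ (x-3)*x*x := by
      apply mul_nonneg (mul_nonneg (by linarith) hx0.le) hx0.le
    nlinarith [hmx, hx3, h1, h2]
  have hlogBig : Real.log (((n+1)*(m n+1)+1 : ℕ) : ℝ) ≤ 12*X := by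
    calc Real.log (((n+1)*(m n+1)+1 : ℕ) : ℝ) ≤ Real.log (x^(3:ℕ)) :=
          Real.log_le_log (by linarith) hBigle
      _ = 3 * Real.log x := by rw [Real.log_pow]; norm_num
      _ ≤ 3 * (x ^ ((1:ℝ)/4) / (1/4)) := by
          have := Real.log_le_rpow_div hx0.le (show (0:ℝ) < 1/4 by norm_num)
          linarith
      _ = 12*X := by rw [hXdef]; ring
  have hlogBig0 : 0 ≤ Real.log (((n+1)*(m n+1)+1 : ℕ) : ℝ) := Real.log_nonneg hBig1
  have hmain : (((n-1 : ℕ)) : ℝ) * Real.log 2 ≤ 72 * (X*X*X) := by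
    calc (((n-1 : ℕ)) : ℝ) * Real.log 2
        ≤ (((d n+2)*(m n+1) : ℕ) : ℝ) * Real.log (((n+1)*(m n+1)+1 : ℕ) : ℝ) := hlog
      _ ≤ (6*(X*X)) * (12*X) := mul_le_mul hE hlogBig hlogBig0 (by positivity)
      _ = 72 * (X*X*X) := by ring
  have hcast : (((n-1 : ℕ)) : ℝ) = x - 1 := by
    rw [Nat.cast_sub (by omega)]
    norm_num
    exact hxdef.symm
  have hlog2 : (1/2 : ℝ) ≤ Real.log 2 := by
    have h := Real.log_two_gt_d9
    have h2 : (0.6931471803:ℝ) = 6931471803/10^10 := by norm_num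
    rw [h2] at h
    linarith
  have hq : x ≤ 288 * (X*X*X) := by
    rw [hcast] at hmain
    nlinarith [hmain, hlog2, hx3, Real.log_nonneg (show (1:ℝ) ≤ 2 by norm_num)]
  have hXXX : X*X*X = x ^ ((3:ℝ)/4) := by
    rw [hXdef, ← Real.rpow_add hx0, ← Real.rpow_add hx0]
    norm_num
  have hxsplit : x = x ^ ((3:ℝ)/4) * X := by
    rw [hXdef, ← Real.rpow_add hx0]
    norm_num
  have h34pos : (0:ℝ) < x ^ ((3:ℝ)/4) := Real.rpow_pos_of_pos hx0 _
  have hXle : X ≤ 288 := by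
    rw [hXXX] at hq
    have hq' : x ^ ((3:ℝ)/4) * X ≤ 288 * x ^ ((3:ℝ)/4) := by
      rw [← hxsplit]
      exact hq
    nlinarith [hq', h34pos]
  have h288 : (288:ℝ)^(4:ℕ) < x := by
    have : ((288^4+1 : ℕ) : ℝ) ≤ x := by exact_mod_cast Nat.cast_le.mpr hn288
    push_cast at this
    linarith
  have hXgt : (288:ℝ) < X := by
    have h1 : ((288:ℝ)^(4:ℕ)) ^ ((1:ℝ)/4) < x ^ ((1:ℝ)/4) :=
      Real.rpow_lt_rpow (by positivity) h288 (by norm_num)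
    have h2 : ((288:ℝ)^(4:ℕ)) ^ ((1:ℝ)/4) = 288 := by
      rw [← Real.rpow_natCast 288 4, ← Real.rpow_mul (by norm_num)]
      norm_num
    rw [h2] at h1
    exact h1
  linarith
end

section
/- There is no 1-layer single-token output transformer with embedding dimension n^{o(1)} and output MLP with n^{o(1)} ReLU neurons that computes SUM₂^{n,n}. Precisely: let (T_n)_{n≥2, n even} be any sequence where T_n is a 1-layer single-token output transformer for input length n and alphabet {−n,…,n}, with embedding dimension d_n and whose output function 𝒩_n is a ReLU MLP with m_n ReLU neurons. If for every c > 0 one has d_n ≤ n^c and m_n ≤ n^c for all sufficiently large n, then there exists n such that T_n does not compute SUM₂^{n,n} (i.e., T_n(x) ≠ SUM₂^{n,n}(x) for some input x ∈ {−n,…,n}^n). -/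
/-- The function `SUM₂^{n,m}` (here with the bound `m` left implicit in the type `ℤ`):
it outputs `1` if there exist `i, j` with `a i + a j = 0`, and `0` otherwise. -/
def sum2 {n : ℕ} (a : Fin n → ℤ) : ℕ :=
  if ∃ i j : Fin n, a i + a j = 0 then 1 else 0

/-!
A ReLU MLP with `m` neurons is affine on each of at most `2^m` pieces, each cut out by `m`
halfspaces, so the sign of `𝒩` at a point is determined by which of `2^m (m + 1)` halfspaces
contain it. Feed the transformer of length `n + 1` the inputs `(x_V, -(v + 1))`, where `x_V`
encodes a set `V ⊆ {0, …, n - 1}` by the token `i + 1` at `i ∈ V` and `n + 1` elsewhere; such an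
input has a pair summing to zero iff `v ∈ V`. The prefix `x_V` enters `h + ĥ` only through its
unnormalised attention sum and total attention weight, and after clearing the (positive)
denominator each halfspace test on `h + ĥ` is a linear threshold in these `d + 1` numbers. Hence
`V` is determined by a pattern of `2^m (m + 1) n` linear thresholds on `ℝ^{d+2}`; such a family
has VC dimension at most `d + 2`, so by Sauer–Shelah there are at most
`(2^m (m + 1) n + 1)^{d+2}` patterns, fewer than the `2^n` sets `V` once `d, m ≤ n^{1/4}` and `n`
is large.
-/

open Matrix Finset Module

theorem Nat.sum_Iic_choose_le_succ_pow (N D : ℕ) : ∑ k ∈ Iic D, N.choose k ≤ (N + 1) ^ D := by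
  rw [add_pow, ← Nat.range_succ_eq_Iic]
  refine Finset.sum_le_sum fun k hk => ?_
  rw [one_pow, mul_one]
  exact (Nat.choose_le_pow N k).trans
    (Nat.le_mul_of_pos_right _ (Nat.choose_pos (Nat.lt_succ_iff.mp (mem_range.mp hk))))

section LinearThreshold

variable {E α : Type*} [AddCommGroup E] [Module ℝ E] [FiniteDimensional ℝ E]

theorem Finset.Shatters.card_le_finrank_of_linearThreshold [DecidableEq α] (A : α → E)
    {𝒜 : Finset (Finset α)} (h𝒜 : ∀ S ∈ 𝒜, ∃ φ : Dual ℝ E, ∀ a, a ∈ S ↔ φ (A a) ≤ 0)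
    {s : Finset α} (hs : 𝒜.Shatters s) : #s ≤ finrank ℝ E := by
  by_contra! hlt
  have hdep : ¬ LinearIndepOn ℝ A (s : Set α) := fun hind =>
    hlt.not_ge (by simpa using hind.fintype_card_le_finrank)
  rw [linearIndepOn_finset_iff] at hdep
  push Not at hdep
  obtain ⟨g, hg, a₀, ha₀, hga₀⟩ := hdep
  -- rescaling by `g a₀` makes the nonzero coefficient positive
  set f : α → ℝ := fun a => g a₀ * g a
  have hf : ∑ a ∈ s, f a • A a = 0 := by
    simp only [f, mul_smul, ← Finset.smul_sum, hg, smul_zero]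
  have hfa₀ : 0 < f a₀ := mul_self_pos.mpr hga₀
  obtain ⟨S, hS, hsS⟩ := hs (Finset.filter_subset (fun a => f a ≤ 0) s)
  obtain ⟨φ, hφ⟩ := h𝒜 S hS
  have hmem : ∀ a ∈ s, (f a ≤ 0 ↔ φ (A a) ≤ 0) := fun a ha => by
    rw [← hφ, ← (Finset.mem_filter (p := fun a => f a ≤ 0)).trans (and_iff_right ha), ← hsS,
      Finset.mem_inter, and_iff_right ha]
  have hφpos : ∀ a ∈ s, 0 < f a → 0 < φ (A a) := fun a ha hfa =>
    not_le.mp fun hφa => hfa.not_ge ((hmem a ha).mpr hφa)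
  have hterm : ∀ a ∈ s, 0 ≤ f a * φ (A a) := fun a ha => by
    rcases le_or_gt (f a) 0 with h | h
    · exact mul_nonneg_of_nonpos_of_nonpos h ((hmem a ha).mp h)
    · exact (mul_pos h (hφpos a ha h)).le
  have hpos : 0 < ∑ a ∈ s, f a * φ (A a) :=
    Finset.sum_pos' hterm ⟨a₀, ha₀, mul_pos hfa₀ (hφpos a₀ ha₀ hfa₀)⟩
  have hzero : ∑ a ∈ s, f a * φ (A a) = 0 := by
    simpa [map_sum, map_smul] using congrArg φ hf
  exact hpos.ne' hzero

theorem Finset.card_le_succ_pow_finrank_of_linearThreshold [Fintype α] [DecidableEq α]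
    (A : α → E) {𝒜 : Finset (Finset α)}
    (h𝒜 : ∀ S ∈ 𝒜, ∃ φ : Dual ℝ E, ∀ a, a ∈ S ↔ φ (A a) ≤ 0) :
    #𝒜 ≤ (Fintype.card α + 1) ^ finrank ℝ E := by
  have hvc : 𝒜.vcDim ≤ finrank ℝ E :=
    Finset.sup_le fun s hs => (mem_shatterer.mp hs).card_le_finrank_of_linearThreshold A h𝒜
  calc #𝒜 ≤ #𝒜.shatterer := card_le_card_shatterer 𝒜
    _ ≤ ∑ k ∈ Iic 𝒜.vcDim, (Fintype.card α).choose k := card_shatterer_le_sum_vcDim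
    _ ≤ ∑ k ∈ Iic (finrank ℝ E), (Fintype.card α).choose k :=
        Finset.sum_le_sum_of_subset (Iic_subset_Iic.mpr hvc)
    _ ≤ (Fintype.card α + 1) ^ finrank ℝ E := Nat.sum_Iic_choose_le_succ_pow _ _

end LinearThreshold

/-- Pieces indexed by `ι` with an affine map `u ↦ A j *ᵥ u + b j` on each; piece `j` is the set
of `u` lying in the halfspace `a j k ⬝ᵥ u ≤ c j k` exactly when `s j k`, for every `k`. -/
structure PiecewiseAffine (din dout m : ℕ) (ι : Type) where
  a : ι → Fin m → Fin din → ℝ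
  c : ι → Fin m → ℝ
  s : ι → Fin m → Prop
  A : ι → Matrix (Fin dout) (Fin din) ℝ
  b : ι → Fin dout → ℝ

namespace PiecewiseAffine

variable {din dout m : ℕ} {ι : Type}

def piece (P : PiecewiseAffine din dout m ι) (j : ι) : Set (Fin din → ℝ) :=
  {u | ∀ k, P.a j k ⬝ᵥ u ≤ P.c j k ↔ P.s j k}

def Represents (P : PiecewiseAffine din dout m ι) (F : (Fin din → ℝ) → Fin dout → ℝ) : Prop :=
  (∀ u, ∃ j, u ∈ P.piece j) ∧ ∀ j, ∀ u ∈ P.piece j, F u = P.A j *ᵥ u + P.b j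

def affine (A : Matrix (Fin dout) (Fin din) ℝ) (b : Fin dout → ℝ) :
    PiecewiseAffine din dout 0 Unit :=
  ⟨fun _ => Fin.elim0, fun _ => Fin.elim0, fun _ => Fin.elim0, fun _ => A, fun _ => b⟩

theorem represents_affine (A : Matrix (Fin dout) (Fin din) ℝ) (b : Fin dout → ℝ) :
    (affine A b).Represents (fun u => A *ᵥ u + b) :=
  ⟨fun _ => ⟨(), fun k => k.elim0⟩, fun _ _ _ => rfl⟩

open Classical in
noncomputable def relu (d : ℕ) : PiecewiseAffine d d d (Fin d → Bool) :=
  ⟨fun _ i => Pi.single i 1, fun _ _ => 0, fun τ i => τ i,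
    fun τ => diagonal fun i => if τ i then 0 else 1, fun _ => 0⟩

theorem represents_relu (d : ℕ) : (relu d).Represents (fun u i => max (u i) 0) := by
  refine ⟨fun u => ⟨fun i => decide (u i ≤ 0), fun i => ?_⟩, fun τ u hu => funext fun i => ?_⟩
  · simp [relu, single_dotProduct]
  · have hi := hu i
    simp only [relu, single_dotProduct, one_mul] at hi
    cases hτ : τ i
    · simp_all [relu, mulVec_diagonal]
      exact hi.le
    · simp_all [relu, mulVec_diagonal]

variable {d₁ d₂ d₃ m₁ m₂ : ℕ} {ι₁ ι₂ : Type}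

def comp (P : PiecewiseAffine d₁ d₂ m₁ ι₁) (Q : PiecewiseAffine d₂ d₃ m₂ ι₂) : PiecewiseAffine d₁ d₃ (m₁ + m₂) (ι₁ × ι₂) where
  a j := Fin.append (P.a j.1) fun k => Q.a j.2 k ᵥ* P.A j.1
  c j := Fin.append (P.c j.1) fun k => Q.c j.2 k - Q.a j.2 k ⬝ᵥ P.b j.1
  s j := Fin.append (P.s j.1) (Q.s j.2)
  A j := Q.A j.2 * P.A j.1
  b j := Q.A j.2 *ᵥ P.b j.1 + Q.b j.2

theorem mem_piece_comp (P : PiecewiseAffine d₁ d₂ m₁ ι₁) (Q : PiecewiseAffine d₂ d₃ m₂ ι₂)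
    (j : ι₁ × ι₂) (u : Fin d₁ → ℝ) :
    u ∈ (P.comp Q).piece j ↔ u ∈ P.piece j.1 ∧ P.A j.1 *ᵥ u + P.b j.1 ∈ Q.piece j.2 := by
  have pullback : ∀ (a : Fin d₂ → ℝ) (c : ℝ),
      a ⬝ᵥ (P.A j.1 *ᵥ u + P.b j.1) ≤ c ↔ (a ᵥ* P.A j.1) ⬝ᵥ u ≤ c - a ⬝ᵥ P.b j.1 := by
    intro a c
    rw [dotProduct_add, dotProduct_mulVec, le_sub_iff_add_le]
  simp only [piece, comp, Set.mem_ofPred_eq, Fin.forall_fin_add, Fin.append_left,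
    Fin.append_right, pullback]

theorem Represents.comp {P : PiecewiseAffine d₁ d₂ m₁ ι₁} {Q : PiecewiseAffine d₂ d₃ m₂ ι₂}
    {f : (Fin d₁ → ℝ) → Fin d₂ → ℝ} {g : (Fin d₂ → ℝ) → Fin d₃ → ℝ} (hP : P.Represents f) (hQ : Q.Represents g) :
    (P.comp Q).Represents (g ∘ f) := by
  refine ⟨fun u => ?_, fun j u hu => ?_⟩
  · obtain ⟨j₁, hj₁⟩ := hP.1 u
    obtain ⟨j₂, hj₂⟩ := hQ.1 (f u)
    exact ⟨(j₁, j₂), (mem_piece_comp P Q _ u).mpr ⟨hj₁, hP.2 j₁ u hj₁ ▸ hj₂⟩⟩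
  · obtain ⟨hu₁, hu₂⟩ := (mem_piece_comp P Q j u).mp hu
    rw [Function.comp_apply, hP.2 j.1 u hu₁, hQ.2 j.2 _ hu₂]
    simp only [PiecewiseAffine.comp, mulVec_add, mulVec_mulVec, add_assoc]

end PiecewiseAffine

theorem IsMLP.exists_piecewiseAffine {din dout m : ℕ} {F : (Fin din → ℝ) → Fin dout → ℝ}
    (hF : IsMLP din dout F m) :
    ∃ (ι : Type) (_ : Fintype ι) (P : PiecewiseAffine din dout m ι),
      Fintype.card ι ≤ 2 ^ m ∧ P.Represents F := by
  induction hF with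
  | affine A b => exact ⟨Unit, inferInstance, _, by simp, PiecewiseAffine.represents_affine A b⟩
  | relu d => exact ⟨_, inferInstance, _, by simp, PiecewiseAffine.represents_relu d⟩
  | comp _ _ ih₁ ih₂ =>
    obtain ⟨ι₁, _, P, hcard₁, hP⟩ := ih₁
    obtain ⟨ι₂, _, Q, hcard₂, hQ⟩ := ih₂
    exact ⟨ι₁ × ι₂, inferInstance, P.comp Q, by
      rw [Fintype.card_prod, pow_add]; exact Nat.mul_le_mul hcard₁ hcard₂, hP.comp hQ⟩

theorem IsReLUMLP.exists_halfspaces_determining_pos {d m : ℕ} {N : (Fin d → ℝ) → ℝ}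
    (hN : IsReLUMLP d m N) :
    ∃ (κ : Type) (_ : Fintype κ) (a : κ → Fin d → ℝ) (c : κ → ℝ),
      Fintype.card κ ≤ 2 ^ m * (m + 1) ∧
      ∀ z z', (∀ k, a k ⬝ᵥ z ≤ c k ↔ a k ⬝ᵥ z' ≤ c k) → (0 < N z ↔ 0 < N z') := by
  obtain ⟨F, hF, hNF⟩ := hN
  obtain ⟨ι, _, P, hcard, hP⟩ := hF.exists_piecewiseAffine
  -- the halfspaces cutting out the pieces, and on each piece the halfspace `{N ≤ 0}`
  refine ⟨ι × Option (Fin m), inferInstance,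
    fun q => q.2.elim (P.A q.1 0) (P.a q.1), fun q => q.2.elim (-P.b q.1 0) (P.c q.1),
    by rw [Fintype.card_prod, Fintype.card_option, Fintype.card_fin]
       exact Nat.mul_le_mul_right _ hcard,
    fun z z' hzz' => ?_⟩
  obtain ⟨j, hz⟩ := hP.1 z
  have hz' : z' ∈ P.piece j := fun k => (hzz' (j, some k)).symm.trans (hz k)
  have pos_iff : ∀ y ∈ P.piece j, (0 < N y ↔ ¬ P.A j 0 ⬝ᵥ y ≤ -P.b j 0) := by
    intro y hy
    rw [hNF, hP.2 j y hy, not_le, neg_lt_iff_pos_add, Pi.add_apply]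
    rfl
  rw [pos_iff z hz, pos_iff z' hz']
  exact not_congr (hzz' (j, none))

theorem dotProduct_add_inv_smul_le_iff {d : ℕ} {a h Y : Fin d → ℝ} {c σ : ℝ} (hσ : 0 < σ) :
    a ⬝ᵥ (h + σ⁻¹ • Y) ≤ c ↔ a ⬝ᵥ Y + σ * (a ⬝ᵥ h - c) ≤ 0 := by
  rw [dotProduct_add, dotProduct_smul, smul_eq_mul, ← le_sub_iff_add_le', inv_mul_le_iff₀ hσ]
  constructor <;> intro hle <;> linarith

def homogenizedPairing {d : ℕ} (Y : Fin d → ℝ) (σ : ℝ) : Dual ℝ ((Fin d → ℝ) × ℝ × ℝ) where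
  toFun e := e.1 ⬝ᵥ Y + σ * e.2.1 + e.2.2
  map_add' e e' := by simp only [Prod.fst_add, Prod.snd_add, add_dotProduct]; ring
  map_smul' r e := by
    simp only [Prod.smul_fst, Prod.smul_snd, smul_dotProduct, smul_eq_mul, RingHom.id_apply]; ring

theorem homogenizedPairing_apply {d : ℕ} (Y : Fin d → ℝ) (σ : ℝ) (e : (Fin d → ℝ) × ℝ × ℝ) :
    homogenizedPairing Y σ e = e.1 ⬝ᵥ Y + σ * e.2.1 + e.2.2 :=
  rfl

namespace Transformer

variable {n d : ℕ} {S : Type*}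

noncomputable def tokenWeight (T : Transformer n d S) (i : Fin n) (s : S) : ℝ :=
  Real.exp ((T.K *ᵥ T.p i s) ⬝ᵥ (T.Q *ᵥ T.h))

theorem w_eq_tokenWeight (T : Transformer n d S) (x : Fin n → S) (i : Fin n) :
    T.w x i = T.tokenWeight i (x i) :=
  rfl

noncomputable def prefixNum (T : Transformer (n + 1) d S) (y : Fin n → S) : Fin d → ℝ :=
  ∑ i, T.tokenWeight i.castSucc (y i) • T.p i.castSucc (y i)

noncomputable def prefixDen (T : Transformer (n + 1) d S) (y : Fin n → S) : ℝ :=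
  ∑ i, T.tokenWeight i.castSucc (y i)

theorem output_snoc (T : Transformer (n + 1) d S) (y : Fin n → S) (s : S) :
    T.output (Fin.snoc y s) =
      if 0 < T.N (T.h + (T.prefixDen y + T.tokenWeight (Fin.last n) s)⁻¹ •
        (T.prefixNum y + T.tokenWeight (Fin.last n) s • T.p (Fin.last n) s)) then 1 else 0 := by
  simp only [output, w_eq_tokenWeight, Fin.sum_univ_castSucc, Fin.snoc_castSucc, Fin.snoc_last,
    prefixNum, prefixDen]
  rfl

theorem card_le_of_injective_output_snoc {m : ℕ} {β γ : Type*} [Fintype β] [Fintype γ]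
    (T : Transformer (n + 1) d S) (hN : IsReLUMLP d m T.N) (x : β → Fin n → S) (t : γ → S)
    (hinj : Function.Injective fun V v => T.output (Fin.snoc (x V) (t v))) :
    Fintype.card β ≤ (2 ^ m * (m + 1) * Fintype.card γ + 1) ^ (d + 2) := by
  classical
  obtain ⟨κ, _, a, c, hcard, hdet⟩ := hN.exists_halfspaces_determining_pos
  set g : γ → ℝ := fun v => T.tokenWeight (Fin.last n) (t v)
  set G : γ → Fin d → ℝ := fun v => g v • T.p (Fin.last n) (t v)
  let point : κ × γ → (Fin d → ℝ) × ℝ × ℝ := fun q =>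
    (a q.1, a q.1 ⬝ᵥ T.h - c q.1, a q.1 ⬝ᵥ G q.2 + g q.2 * (a q.1 ⬝ᵥ T.h - c q.1))
  let Λ V := homogenizedPairing (T.prefixNum (x V)) (T.prefixDen (x V))
  let pattern : β → Finset (κ × γ) := fun V => univ.filter fun q => Λ V (point q) ≤ 0
  have mem_pattern : ∀ V k v, a k ⬝ᵥ (T.h + (T.prefixDen (x V) + g v)⁻¹ •
      (T.prefixNum (x V) + G v)) ≤ c k ↔ (k, v) ∈ pattern V := by
    intro V k v
    have hden : 0 < T.prefixDen (x V) + g v :=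
      add_pos_of_nonneg_of_pos (sum_nonneg fun _ _ => (Real.exp_pos _).le) (Real.exp_pos _)
    rw [dotProduct_add_inv_smul_le_iff hden, mem_filter, and_iff_right (mem_univ _)]
    convert Iff.rfl using 2
    simp only [point, Λ, homogenizedPairing_apply, dotProduct_add]
    ring
  have pattern_injective : Function.Injective pattern := fun V V' hVV' => hinj <| funext fun v => by
    simp only [output_snoc]
    exact if_congr (hdet _ _ fun k => by rw [mem_pattern, mem_pattern, hVV']) rfl rfl
  have hfinrank : finrank ℝ ((Fin d → ℝ) × ℝ × ℝ) = d + 2 := by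
    simp [Module.finrank_prod]
  calc Fintype.card β = #(univ.image pattern) := (card_image_of_injective _ pattern_injective).symm
    _ ≤ (Fintype.card (κ × γ) + 1) ^ (d + 2) := hfinrank ▸
        card_le_succ_pow_finrank_of_linearThreshold point fun P hP => by
          obtain ⟨V, -, rfl⟩ := mem_image.mp hP
          exact ⟨Λ V, fun q => by simp [pattern]⟩
    _ ≤ (2 ^ m * (m + 1) * Fintype.card γ + 1) ^ (d + 2) := by
        rw [Fintype.card_prod]
        gcongr

end Transformer

theorem sum2_snoc_of_pos_of_neg {n : ℕ} {a : Fin n → ℤ} {t : ℤ} (ha : ∀ i, 0 < a i) (ht : t < 0) :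
    sum2 (Fin.snoc a t) = if ∃ i, a i + t = 0 then 1 else 0 := by
  refine if_congr ?_ rfl rfl
  simp only [Fin.exists_fin_succ', Fin.snoc_castSucc, Fin.snoc_last]
  constructor
  · rintro (⟨i, (⟨j, hij⟩ | hi)⟩ | (⟨j, hj⟩ | htt))
    · linarith [ha i, ha j]
    · exact ⟨i, hi⟩
    · exact ⟨j, by linarith⟩
    · linarith
  · rintro ⟨i, hi⟩
    exact Or.inl ⟨i, Or.inr hi⟩

abbrev SumAlphabet (n : ℕ) : Type := {z : ℤ // z ∈ Finset.Icc (-(n : ℤ)) n}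

def subsetTokens (n : ℕ) (V : Finset (Fin n)) (i : Fin n) : SumAlphabet (n + 1) :=
  if i ∈ V then ⟨i + 1, by simp; omega⟩ else ⟨n + 1, by simp; omega⟩

def queryToken (n : ℕ) (v : Fin n) : SumAlphabet (n + 1) :=
  ⟨-(v + 1), by simp; omega⟩

theorem sum2_snoc_subsetTokens_queryToken {n : ℕ} (V : Finset (Fin n)) (v : Fin n) :
    sum2 (fun i => ((Fin.snoc (subsetTokens n V) (queryToken n v) : Fin (n + 1) → _) i : ℤ)) =
      if v ∈ V then 1 else 0 := by
  rw [← Function.comp_def Subtype.val, Fin.comp_snoc,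
    sum2_snoc_of_pos_of_neg (fun i => ?_) (by simp [queryToken]; omega)]
  · refine if_congr ⟨fun ⟨i, hi⟩ => ?_, fun hv => ⟨v, by simp [subsetTokens, queryToken, hv]⟩⟩
      rfl rfl
    simp only [Function.comp_apply, subsetTokens, queryToken] at hi
    split_ifs at hi with hiV
    · rwa [← Fin.ext (by simp at hi; omega : (i : ℕ) = v)]
    · simp at hi; omega
  · simp only [Function.comp_apply, subsetTokens]
    split_ifs <;> simp

theorem two_pow_le_of_computes_sum2 {n d m : ℕ} (T : Transformer (n + 1) d (SumAlphabet (n + 1)))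
    (hN : IsReLUMLP d m T.N) (hT : ∀ x, T.output x = sum2 fun i => (x i : ℤ)) :
    2 ^ n ≤ (2 ^ m * (m + 1) * n + 1) ^ (d + 2) := by
  simpa using T.card_le_of_injective_output_snoc hN (subsetTokens n) (queryToken n)
    fun V V' hVV' => Finset.ext fun v => by
      have hv := congrFun hVV' v
      simp only [hT, sum2_snoc_subsetTokens_queryToken] at hv
      split_ifs at hv <;> simp_all

theorem Nat.four_mul_le_two_pow {k : ℕ} (hk : 4 ≤ k) : 4 * k ≤ 2 ^ k := by
  obtain ⟨j, rfl⟩ := Nat.exists_eq_add_of_le' hk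
  have := Nat.lt_two_pow_self (n := j)
  rw [pow_add]
  omega

theorem succ_pow_lt_two_pow_of_le_two_pow {k n d m : ℕ} (hk : 4 ≤ k) (hn : n + 1 = 2 ^ (4 * k))
    (hd : d ≤ 2 ^ k) (hm : m ≤ 2 ^ k) :
    (2 ^ m * (m + 1) * n + 1) ^ (d + 2) < 2 ^ n := by
  set M := 2 ^ k with hM
  have hM16 : 16 ≤ M := le_trans (by norm_num) (Nat.pow_le_pow_right two_pos hk)
  have hneurons : 2 ^ m * (m + 1) ≤ 2 ^ (2 * M) := calc
    2 ^ m * (m + 1) ≤ 2 ^ m * 2 ^ m := Nat.mul_le_mul_left _ (Nat.lt_two_pow_self)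
    _ = 2 ^ (2 * m) := by rw [← pow_add, two_mul]
    _ ≤ 2 ^ (2 * M) := Nat.pow_le_pow_right two_pos (by omega)
  have hbase : 2 ^ m * (m + 1) * n + 1 ≤ 2 ^ (3 * M) := calc
    2 ^ m * (m + 1) * n + 1 ≤ 2 ^ (2 * M) * (n + 1) := by
        have := Nat.one_le_two_pow (n := 2 * M)
        nlinarith
    _ = 2 ^ (2 * M + 4 * k) := by rw [hn, pow_add]
    _ ≤ 2 ^ (3 * M) := Nat.pow_le_pow_right two_pos (by linarith [Nat.four_mul_le_two_pow hk])
  have hexp : 3 * M * (2 * M) < n := by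
    have hn' : n + 1 = M ^ 2 * M ^ 2 := by rw [hn, hM, ← pow_mul, ← pow_add]; ring_nf
    have hM2 : 16 * 16 ≤ M ^ 2 := by nlinarith
    nlinarith
  calc (2 ^ m * (m + 1) * n + 1) ^ (d + 2) ≤ (2 ^ (3 * M)) ^ (2 * M) :=
        (Nat.pow_le_pow_left hbase _).trans
          (Nat.pow_le_pow_right (Nat.one_le_two_pow) (by omega))
    _ = 2 ^ (3 * M * (2 * M)) := (pow_mul _ _ _).symm
    _ < 2 ^ n := Nat.pow_lt_pow_right one_lt_two hexp

/-- There is no 1-layer single-token output transformer with embedding dimension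
`n^{o(1)}` and output MLP with `n^{o(1)}` ReLU neurons that computes `SUM₂^{n,n}`:
for any sequence `(T_n)_{n ≥ 2, n even}` of 1-layer single-token output transformers
for input length `n` and alphabet `{-n, …, n}`, with embedding dimensions `d n` and
whose output functions are ReLU MLPs with `m n` ReLU neurons, if for every `c > 0` one
has `d n ≤ n ^ c` and `m n ≤ n ^ c` for all sufficiently large (even) `n`, then there
exists an even `n ≥ 2` such that `T_n` does not compute `SUM₂^{n,n}`. -/
theorem no_small_one_layer_transformer_computes_sum2
    (d m : ℕ → ℕ)
    (T : (n : ℕ) → Transformer n (d n) {z : ℤ // z ∈ Finset.Icc (-(n : ℤ)) (n : ℤ)})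
    (hMLP : ∀ n : ℕ, 2 ≤ n → Even n → IsReLUMLP (d n) (m n) ((T n).N))
    (hsmall : ∀ c : ℝ, 0 < c → ∃ N₀ : ℕ, ∀ n : ℕ, N₀ ≤ n → Even n →
      (d n : ℝ) ≤ (n : ℝ) ^ c ∧ (m n : ℝ) ≤ (n : ℝ) ^ c) :
    ∃ n : ℕ, 2 ≤ n ∧ Even n ∧
      ∃ x : Fin n → {z : ℤ // z ∈ Finset.Icc (-(n : ℤ)) (n : ℤ)},
        (T n).output x ≠ sum2 (fun i => (x i : ℤ)) := by
  by_contra! hcomputes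
  obtain ⟨N₀, hN₀⟩ := hsmall ((4 : ℕ) : ℝ)⁻¹ (by positivity)
  set k := max 4 N₀
  obtain ⟨n, hn⟩ : ∃ n, n + 1 = 2 ^ (4 * k) := ⟨_, Nat.sub_add_cancel Nat.one_le_two_pow⟩
  have hlen : 2 ≤ n + 1 := hn ▸ le_self_pow₀ one_le_two (by omega)
  have heven : Even (n + 1) := hn ▸ (Nat.even_pow.mpr ⟨even_two, by omega⟩)
  have hN₀n : N₀ ≤ n + 1 := by
    have : 2 ^ k ≤ 2 ^ (4 * k) := Nat.pow_le_pow_right two_pos (by omega)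
    have := Nat.lt_two_pow_self (n := k)
    omega
  have hroot : ((n + 1 : ℕ) : ℝ) ^ ((4 : ℕ) : ℝ)⁻¹ = ((2 ^ k : ℕ) : ℝ) := by
    rw [hn, pow_mul', Nat.cast_pow, Real.pow_rpow_inv_natCast (by positivity) (by norm_num)]
  obtain ⟨hd, hm⟩ := hN₀ (n + 1) hN₀n heven
  rw [hroot, Nat.cast_le] at hd hm
  exact (succ_pow_lt_two_pow_of_le_two_pow (le_max_left 4 N₀) hn hd hm).not_ge
    (two_pow_le_of_computes_sum2 (T (n + 1)) (hMLP _ hlen heven) (hcomputes _ hlen heven))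
end

section
/- There exists a constant C such that for every n ≥ 1 there is a 1-layer single-token output transformer for input length n and alphabet {0,1}, with embedding dimension d ≤ C and whose output function 𝒩 is a ReLU MLP with at most C ReLU neurons, that computes pal_n (i.e., T(x) = pal_n(x) for every x ∈ {0,1}^n). -/
/-- The palindrome function `pal_n` on `{0,1}^n`: outputs `1` if `x_i = x_{n+1-i}`
for every `i ∈ {1, …, n}` (here 0-indexed via `Fin.rev`), and `0` otherwise. -/
def pal {n : ℕ} (x : Fin n → Fin 2) : ℕ :=
  if ∀ i : Fin n, x i = x i.rev then 1 else 0

/-!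
With `K = 0` the attention is uniform, so the transformer sees the mean of the encodings
`n * x_i * c_i`, i.e. the integer `∑ i, x_i * c_i`. Take `c_i = e_i - e_{n-1-i}` with
`e_i = 2^i` on the first half of the positions and `0` elsewhere: the sum is then
`B(x_0 … x_{⌊n/2⌋-1}) - B(x_{n-1} … x_{n-⌊n/2⌋})` for the binary value `B`, which vanishes
exactly for palindromes by uniqueness of binary expansions. Being an integer, it is zero iff
`1 - |t| > 0`, and `1 - |t| = 1 - relu t - relu (-t)` is an MLP with two neurons.
-/

open Finset

namespace Transformer

variable {n d : ℕ} {S : Type*} (T : Transformer n d S)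

lemma w_eq_one_of_K_eq_zero (hK : T.K = 0) (x : Fin n → S) (i : Fin n) : T.w x i = 1 := by
  simp [w, hK]

lemma output_eq_of_K_eq_zero (hK : T.K = 0) (x : Fin n → S) :
    T.output x = if 0 < T.N (T.h + (n : ℝ)⁻¹ • ∑ i, T.p i (x i)) then 1 else 0 := by
  simp [output, T.w_eq_one_of_K_eq_zero hK]

end Transformer

theorem isReLUMLP_const_sub_abs (a : ℝ) : IsReLUMLP 1 2 (fun v => a - |v 0|) := by
  let A : Matrix (Fin 2) (Fin 1) ℝ := !![1; -1]
  let B : Matrix (Fin 1) (Fin 2) ℝ := !![-1, -1]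
  refine ⟨_, ((IsMLP.affine A 0).comp (IsMLP.relu 2)).comp (IsMLP.affine B fun _ => a), fun v => ?_⟩
  simp only [Fin.isValue, Matrix.cons_mulVec, dotProduct, Fin.sum_univ_two, Matrix.cons_val_zero,
    neg_mul, one_mul, Matrix.cons_val_one, Matrix.cons_val_fin_one, Matrix.empty_mulVec,
    Matrix.cons_add, Matrix.head_fin_const, Matrix.empty_add_empty, univ_unique, Fin.default_eq_zero,
    sum_singleton, sum_neg_distrib, add_zero, Function.comp_apply, B, A]
  linarith [max_zero_add_max_neg_zero_eq_abs_self (v 0)]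

def binaryValue {n : ℕ} (f : Fin n → Fin 2) : ℕ :=
  ∑ i, (f i : ℕ) * 2 ^ (i : ℕ)

theorem binaryValue_injective (n : ℕ) : Function.Injective (binaryValue (n := n)) :=
  fun f g h => finFunctionFinEquiv.injective <| Fin.ext <| by
    simpa only [finFunctionFinEquiv_apply, binaryValue] using h

def maskFirstHalf {n : ℕ} {α : Type*} [Zero α] (x : Fin n → α) (i : Fin n) : α :=
  if i < i.rev then x i else 0

theorem forall_eq_rev_iff_maskFirstHalf_eq {n : ℕ} {α : Type*} [Zero α] (x : Fin n → α) :
    (∀ i, x i = x i.rev) ↔ maskFirstHalf x = maskFirstHalf (x ∘ Fin.rev) := by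
  refine ⟨fun h => funext fun i => by simp [maskFirstHalf, ← h i], fun h i => ?_⟩
  rcases lt_trichotomy i i.rev with hi | hi | hi
  · simpa [maskFirstHalf, hi] using congrFun h i
  · rw [← hi]
  · have hi' : i.rev < i.rev.rev := by rwa [Fin.rev_rev]
    simpa [maskFirstHalf, hi, hi'] using (congrFun h i.rev).symm

noncomputable def halfWeight {n : ℕ} (i : Fin n) : ℝ :=
  if i < i.rev then 2 ^ (i : ℕ) else 0

theorem sum_mul_halfWeight {n : ℕ} (y : Fin n → Fin 2) :
    ∑ i, ((y i : ℕ) : ℝ) * halfWeight i = binaryValue (maskFirstHalf y) := by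
  simp only [binaryValue]
  push_cast
  refine sum_congr rfl fun i _ => ?_
  by_cases hi : i < i.rev <;> simp [maskFirstHalf, halfWeight, hi]

theorem sum_mul_halfWeight_sub_rev {n : ℕ} (x : Fin n → Fin 2) :
    ∑ i, ((x i : ℕ) : ℝ) * (halfWeight i - halfWeight i.rev) =
      (binaryValue (maskFirstHalf x) : ℝ) - binaryValue (maskFirstHalf (x ∘ Fin.rev)) := by
  have hrev : ∑ i, ((x i : ℕ) : ℝ) * halfWeight i.rev = ∑ i, ((x i.rev : ℕ) : ℝ) * halfWeight i :=
    Fintype.sum_equiv Fin.revPerm _ _ fun i => by simp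
  rw [← sum_mul_halfWeight, ← sum_mul_halfWeight]
  simp only [Function.comp_apply, ← hrev, ← sum_sub_distrib, mul_sub]

theorem Nat.abs_cast_sub_cast_lt_one_iff {a b : ℕ} : |(a : ℝ) - b| < 1 ↔ a = b := by
  rw [← Int.cast_natCast a, ← Int.cast_natCast b, ← Int.cast_sub, ← Int.cast_abs, ← Int.cast_one,
    Int.cast_lt, Int.abs_lt_one_iff, sub_eq_zero, Nat.cast_inj]

noncomputable def palTransformer (n : ℕ) : Transformer n 1 (Fin 2) where
  p i b _ := n * ((b : ℕ) * (halfWeight i - halfWeight i.rev))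
  h := 0
  K := 0
  Q := 0
  N v := 1 - |v 0|

theorem palTransformer_output (n : ℕ) (x : Fin n → Fin 2) :
    (palTransformer n).output x =
      if binaryValue (maskFirstHalf x) = binaryValue (maskFirstHalf (x ∘ Fin.rev)) then 1 else 0 := by
  have hmean : (n : ℝ)⁻¹ • ∑ i, (palTransformer n).p i (x i) =
      fun _ => ∑ i, ((x i : ℕ) : ℝ) * (halfWeight i - halfWeight i.rev) := by
    rcases n.eq_zero_or_pos with rfl | hn
    · ext; simp
    · ext
      simp [palTransformer, ← Finset.mul_sum, hn.ne']
  rw [Transformer.output_eq_of_K_eq_zero _ rfl, hmean, sum_mul_halfWeight_sub_rev]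
  exact if_congr (by simp [palTransformer, Nat.abs_cast_sub_cast_lt_one_iff]) rfl rfl

/-- There exists a constant `C` such that for every `n ≥ 1` there is a 1-layer
single-token output transformer for input length `n` and alphabet `{0,1}`, with
embedding dimension `d ≤ C` and whose output function is a ReLU MLP with at most
`C` ReLU neurons, that computes `pal_n`. -/
theorem small_one_layer_transformer_computes_pal :
    ∃ C : ℕ, ∀ n : ℕ, 1 ≤ n →
      ∃ (d m : ℕ) (T : Transformer n d (Fin 2)),
        d ≤ C ∧ m ≤ C ∧ IsReLUMLP d m T.N ∧
        ∀ x : Fin n → Fin 2, T.output x = pal x := by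
  refine ⟨2, fun n _ => ⟨1, 2, palTransformer n, by norm_num, le_rfl,
    isReLUMLP_const_sub_abs 1, fun x => ?_⟩⟩
  rw [palTransformer_output, pal]
  exact if_congr ((binaryValue_injective n).eq_iff.trans (forall_eq_rev_iff_maskFirstHalf_eq x).symm)
    rfl rfl
end

section
/- Let n = 2k be even with k ≥ 1, let d ≥ 1, and let p : {1,…,n} × {−n,…,n} → ℝ^d, h ∈ ℝ^d, K, Q ∈ ℝ^{d×d}, and 𝒩 : ℝ^d → ℝ be arbitrary, and suppose the resulting 1-layer single-token output transformer T computes SUM₂^{n,n} on all inputs. For α ∈ {0,1}^k, let a_i(α) = 2i if α_i = 1 and a_i(α) = 1 otherwise, set f_i = p(i, a_i(α)) for i = 1,…,k, and define x(α) = Σ_{i=1}^k e^{⟨K f_i, Q h⟩} f_i ∈ ℝ^d and s(α) = Σ_{i=1}^k e^{⟨K f_i, Q h⟩} ∈ ℝ. Let e_1,…,e_k ∈ {0,1}^k denote the standard basis vectors (e_i has a 1 exactly in position i). Then the hypothesis class H = { (x, s) ↦ 𝟙[𝒩(h + (x + y)/(s + q)) > 0] : (y, q) ∈ ℝ^d ×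 ℝ } over domain ℝ^d × ℝ shatters the k points (x(e_1), s(e_1)), …, (x(e_k), s(e_k)); that is, for every β ∈ {0,1}^k there exist (y, q) ∈ ℝ^d × ℝ such that for all i ∈ {1,…,k}: 𝒩(h + (x(e_i) + y)/(s(e_i) + q)) > 0 if and only if β_i = 1. In particular, H has VC dimension at least n/2. -/
namespace Transformer

variable {n m k d : ℕ} {S : Type*}

noncomputable def score (T : Transformer n d S) (i : Fin n) (s : S) : ℝ :=
  Real.exp (dotProduct (T.K.mulVec (T.p i s)) (T.Q.mulVec T.h))

noncomputable def attnMass (T : Transformer n d S) (pos : Fin k → Fin n) (u : Fin k → S) : ℝ :=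
  ∑ i, T.score (pos i) (u i)

noncomputable def attnSum (T : Transformer n d S) (pos : Fin k → Fin n) (u : Fin k → S) :
    Fin d → ℝ :=
  ∑ i, T.score (pos i) (u i) • T.p (pos i) (u i)

theorem w_eq_score (T : Transformer n d S) (x : Fin n → S) (i : Fin n) :
    T.w x i = T.score i (x i) :=
  rfl

theorem output_append_eq_one_iff (T : Transformer (m + k) d S) (u : Fin m → S)
    (v : Fin k → S) :
    T.output (Fin.append u v) = 1 ↔
      0 < T.N (T.h + (T.attnMass (Fin.castAdd k) u + T.attnMass (Fin.natAdd m) v)⁻¹ •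
          (T.attnSum (Fin.castAdd k) u + T.attnSum (Fin.natAdd m) v)) := by
  simp only [output, attnMass, attnSum, w_eq_score, Fin.sum_univ_add, Fin.append_left,
    Fin.append_right, ite_eq_left_iff, zero_ne_one, imp_false, not_not]

end Transformer

theorem Fin.exists_append_add_eq_zero_iff {M : Type*} [AddCommMonoid M] {m k : ℕ}
    (u : Fin m → M) (v : Fin k → M) :
    (∃ l l', Fin.append u v l + Fin.append u v l' = 0) ↔
      (∃ l l', u l + u l' = 0) ∨ (∃ l l', u l + v l' = 0) ∨ ∃ l l', v l + v l' = 0 := by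
  constructor
  · rintro ⟨l, l', hl⟩
    induction l using Fin.addCases <;> induction l' using Fin.addCases <;>
      simp only [Fin.append_left, Fin.append_right] at hl
    · exact .inl ⟨_, _, hl⟩
    · exact .inr (.inl ⟨_, _, hl⟩)
    · exact .inr (.inl ⟨_, _, add_comm (v _) (u _) ▸ hl⟩)
    · exact .inr (.inr ⟨_, _, hl⟩)
  · rintro (⟨l, l', hl⟩ | ⟨l, l', hl⟩ | ⟨l, l', hl⟩)
    · exact ⟨Fin.castAdd k l, Fin.castAdd k l', by simpa using hl⟩
    · exact ⟨Fin.castAdd k l, Fin.natAdd m l', by simpa using hl⟩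
    · exact ⟨Fin.natAdd m l, Fin.natAdd m l', by simpa using hl⟩

theorem sum2_eq_one_iff {n : ℕ} (a : Fin n → ℤ) : sum2 a = 1 ↔ ∃ i j, a i + a j = 0 := by
  simp [sum2]

def probeCode {k : ℕ} (i j : Fin k) : ℤ := if j = i then 2 * ((j : ℕ) + 1) else 1

def selectorCode {k : ℕ} (β : Fin k → Bool) (j : Fin k) : ℤ :=
  if β j then -(2 * ((j : ℕ) + 1)) else 1

theorem selectorCode_mem_Icc {k : ℕ} (β : Fin k → Bool) (j : Fin k) :
    selectorCode β j ∈ Finset.Icc (-((k + k : ℕ) : ℤ)) ((k + k : ℕ) : ℤ) := by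
  have := j.isLt
  simp only [selectorCode, Finset.mem_Icc]
  split <;> omega

theorem exists_probeCode_append_selectorCode_add_eq_zero_iff {k : ℕ} (i : Fin k)
    (β : Fin k → Bool) :
    (∃ l l', Fin.append (probeCode i) (selectorCode β) l +
      Fin.append (probeCode i) (selectorCode β) l' = 0) ↔ β i := by
  rw [Fin.exists_append_add_eq_zero_iff]
  refine ⟨fun h => ?_, fun hβ => .inr (.inl ⟨i, i, by simp [probeCode, selectorCode, hβ]⟩)⟩
  rcases h with ⟨l, l', hl⟩ | ⟨l, l', hl⟩ | ⟨l, l', hl⟩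
  · simp only [probeCode] at hl
    split_ifs at hl <;> omega
  · simp only [probeCode, selectorCode] at hl
    split_ifs at hl with hli hβ
    · obtain rfl : l' = i := by ext; omega
      exact hβ
    all_goals omega
  · simp only [selectorCode] at hl
    split_ifs at hl <;> omega

/-- Let `n = 2k` with `k ≥ 1`, `d ≥ 1`, and let `p`, `h`, `K`, `Q`, `N` be arbitrary
components of a 1-layer single-token output transformer (alphabet `{-n, …, n}`)
computing `SUM₂^{n,n}` on all inputs.  For `α ∈ {0,1}^k` let `a_i(α) = 2i` if `α_i = 1`
and `a_i(α) = 1` otherwise, let `f_i = p(i, a_i(α))`, `w_i = e^{⟨K f_i, Q h⟩}`,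
`x(α) = Σ_i w_i • f_i` and `s(α) = Σ_i w_i`.  Then the hypothesis class
`{(x, s) ↦ 𝟙[N (h + (x + y)/(s + q)) > 0] : (y, q) ∈ ℝ^d × ℝ}` shatters the `k`
points `(x(e_i), s(e_i))` where `e_i ∈ {0,1}^k` are the standard basis vectors:
for every `β ∈ {0,1}^k` there exist `(y, q)` such that for all `i`,
`N (h + (x(e_i) + y)/(s(e_i) + q)) > 0` iff `β_i = 1`.  In particular the class has
VC dimension at least `n / 2`. -/
theorem sum2_transformer_shatters
    (k d n : ℕ) (hn : n = 2 * k)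
    (p : Fin n → {z : ℤ // z ∈ Finset.Icc (-(n : ℤ)) (n : ℤ)} → (Fin d → ℝ))
    (h : Fin d → ℝ) (K Q : Matrix (Fin d) (Fin d) ℝ) (N : (Fin d → ℝ) → ℝ)
    (hT : ∀ x : Fin n → {z : ℤ // z ∈ Finset.Icc (-(n : ℤ)) (n : ℤ)},
      (Transformer.mk p h K Q N).output x = sum2 (fun i => (x i : ℤ)))
    (a : (Fin k → Bool) → Fin k → {z : ℤ // z ∈ Finset.Icc (-(n : ℤ)) (n : ℤ)})
    (ha : ∀ (α : Fin k → Bool) (i : Fin k),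
      (a α i : ℤ) = if α i then 2 * ((i : ℕ) + 1) else 1)
    (f : (Fin k → Bool) → Fin k → (Fin d → ℝ))
    (hf : ∀ (α : Fin k → Bool) (i : Fin k),
      f α i = p ⟨(i : ℕ), by have := i.isLt; omega⟩ (a α i))
    (w : (Fin k → Bool) → Fin k → ℝ)
    (hw : ∀ (α : Fin k → Bool) (i : Fin k),
      w α i = Real.exp (dotProduct (K.mulVec (f α i)) (Q.mulVec h)))
    (xv : (Fin k → Bool) → (Fin d → ℝ))
    (hxv : ∀ α : Fin k → Bool, xv α = ∑ i, w α i • f α i)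
    (sv : (Fin k → Bool) → ℝ)
    (hsv : ∀ α : Fin k → Bool, sv α = ∑ i, w α i) :
    ∀ β : Fin k → Bool, ∃ (y : Fin d → ℝ) (q : ℝ),
      ∀ i : Fin k,
        (0 < N (h + (sv (fun j => decide (j = i)) + q)⁻¹ •
            (xv (fun j => decide (j = i)) + y)) ↔ β i = true) := by
  obtain rfl : n = k + k := by omega
  intro β
  set T := Transformer.mk p h K Q N
  let b : Fin k → {z : ℤ // z ∈ Finset.Icc (-((k + k : ℕ) : ℤ)) ((k + k : ℕ) : ℤ)} :=
    fun j => ⟨selectorCode β j, selectorCode_mem_Icc β j⟩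
  refine ⟨T.attnSum (Fin.natAdd k) b, T.attnMass (Fin.natAdd k) b, fun i => ?_⟩
  set e : Fin k → Bool := fun j => decide (j = i)
  have hw' : ∀ j, w e j = T.score (Fin.castAdd k j) (a e j) := fun j => by rw [hw, hf]; rfl
  have hsv' : sv e = T.attnMass (Fin.castAdd k) (a e) := by
    simp only [hsv, hw', Transformer.attnMass]
  have hxv' : xv e = T.attnSum (Fin.castAdd k) (a e) := by
    simp only [hxv, hw', hf, Transformer.attnSum]; rfl
  have hcode : ∀ l, (Fin.append (a e) b l).val = Fin.append (probeCode i) (selectorCode β) l := by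
    refine (Fin.forall_fin_add _).2 ⟨fun j => ?_, fun j => ?_⟩ <;>
      simp only [Fin.append_left, Fin.append_right] <;> simp [ha, e, b, probeCode]
  have hout : T.output (Fin.append (a e) b) = 1 ↔ β i := by
    rw [hT, sum2_eq_one_iff]
    simp only [hcode]
    exact exists_probeCode_append_selectorCode_add_eq_zero_iff i β
  rw [hsv', hxv', ← hout, T.output_append_eq_one_iff]
end
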